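/- Let a, b ≥ 2 be integers and let A = 1 + M^a·(M+1)^b in F_2[x]. Then: (i) if a + b = 2^r for some r ≥ 1, then ℓ_A = b + 1; (ii) if a + b = 2^r·u with u ≥ 3 odd and r ≥ 1, then ℓ_A = b + 2^r·(2^w - u) + 1, where w is the least positive integer such that u - 1 < 2^w; (iii) if a + b = 2^t + 1 for some t ≥ 1, then ℓ_A = a + 2b - 1; (iv) if a + b = 2v + 1 where v is not a power of 2, then ℓ_A = b + 2^r - 2v, where r is the least positive integer such that 2v < 2^r. -/

import Mathlib

open Polynomial Finset

/-- The polynomial `M = x^2 + x + 1` over `F_2`. -/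
noncomputable def M : Polynomial (ZMod 2) := X ^ 2 + X + 1

/-- The odd part of a binary polynomial: `P` divided by `x^{val_x(P)} (x+1)^{val_{x+1}(P)}`. -/
noncomputable def oddPart (P : Polynomial (ZMod 2)) : Polynomial (ZMod 2) :=
  P / (X ^ P.rootMultiplicity 0 * (X + 1) ^ P.rootMultiplicity 1)

/-- The Collatz sequence of a binary polynomial `A`:
`A_0 = A`, `A_{2k+1} = oddPart A_{2k}`, `A_{2k+2} = 1 + M * A_{2k+1}`. -/
noncomputable def collatz (A : Polynomial (ZMod 2)) : ℕ → Polynomial (ZMod 2)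
  | 0 => A
  | n + 1 => if n % 2 = 0 then oddPart (collatz A n) else 1 + M * collatz A n

/-- `a_k`: the multiplicity of `x` in `A_k`. -/
noncomputable def aSeq (A : Polynomial (ZMod 2)) (k : ℕ) : ℕ :=
  (collatz A k).rootMultiplicity 0

/-- `b_k`: the multiplicity of `x + 1` in `A_k`. -/
noncomputable def bSeq (A : Polynomial (ZMod 2)) (k : ℕ) : ℕ :=
  (collatz A k).rootMultiplicity 1

/-- The length `ℓ_A = m + 1`, where `m` is the least nonnegative integer
with `A_{2m+1} = 1`. -/
noncomputable def collatzLength (A : Polynomial (ZMod 2)) : ℕ :=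
  sInf {m : ℕ | collatz A (2 * m + 1) = 1} + 1

/-!
Write `N = M + 1 = x (x + 1)` and `T = collatzStep : P ↦ oddPart (1 + M P)`, so that
`A_{2k+1} = T^k (oddPart A)`.
Since `M ≡ 1 [mod N]`, a polynomial `1 + M^c N^d F` with `d ≥ 1` is odd and `T` sends it to
`1 + M^(c+1) N^(d-1) F`; after `d` steps one reaches the odd part of `1 + M^(c+d) F`, without
meeting `1` on the way when `F ≠ 0`. From `A = 1 + M^a N^b` this reaches the odd part of
`1 + M^(a+b)` after `b` steps.

For `n = 2^s (2w + 1)` Frobenius gives `1 + M^n = N^(2^s) (1 + M^(2^s) N^(2^s) G)`, where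
`1 + M^(2^(s+1) w) = N^(2^(s+1)) G`, so `2^s` more steps lead from the odd part of `1 + M^n` to
the odd part of `1 + M^(n + 2^s)`. Hence `n` climbs to the power of two `2^k` with
`2^k / 2 < n ≤ 2^k`, where the odd part is `1`, in exactly `2^k - n` steps, and
`ℓ_A = b + 2^k - (a + b) + 1`; the four cases are this formula for the respective `2^k`.
-/

lemma M_add_one_eq : M + 1 = X * (X + 1) := by
  rw [M, add_assoc, CharTwo.add_self_eq_zero, add_zero, sq, mul_add_one]

lemma M_ne_zero : M ≠ 0 := by
  intro h
  simpa [h] using (show M.eval 0 = 1 by simp [M])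

lemma M_add_one_ne_zero : M + 1 ≠ 0 := by
  rw [M_add_one_eq]
  exact mul_ne_zero X_ne_zero (X_add_C_ne_zero 1)

lemma one_add_M_pow_ne_zero {n : ℕ} (hn : n ≠ 0) : 1 + M ^ n ≠ 0 := by
  intro h
  have hMn : M ^ n = 1 := by
    linear_combination h - CharTwo.two_eq_zero (R := Polynomial (ZMod 2))
  have hdeg := natDegree_eq_zero_of_isUnit ((isUnit_pow_iff hn).mp (hMn ▸ isUnit_one))
  rw [show M.natDegree = 2 by unfold M; compute_degree!] at hdeg
  exact two_ne_zero hdeg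

lemma M_add_one_pow_two_pow (t : ℕ) : (M + 1) ^ 2 ^ t = 1 + M ^ 2 ^ t := by
  rw [add_pow_char_pow, one_pow, add_comm]

lemma M_add_one_pow_two_pow_dvd (t w : ℕ) : (M + 1) ^ 2 ^ t ∣ 1 + M ^ (2 ^ t * w) :=
  calc (M + 1) ^ 2 ^ t ∣ (1 + M ^ w) ^ 2 ^ t := pow_dvd_pow_of_dvd
        (by simpa only [CharTwo.sub_eq_add, add_comm] using sub_one_dvd_pow_sub_one M w) _
    _ = 1 + M ^ (2 ^ t * w) := by rw [add_pow_char_pow, one_pow, ← pow_mul, mul_comm]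

lemma oddPart_eq_self {P : Polynomial (ZMod 2)} (h0 : P.eval 0 ≠ 0) (h1 : P.eval 1 ≠ 0) :
    oddPart P = P := by
  rw [oddPart, rootMultiplicity_eq_zero h0, rootMultiplicity_eq_zero h1, pow_zero, pow_zero,
    mul_one, EuclideanDomain.div_one]

lemma oddPart_one_add_of_M_add_one_dvd {Q : Polynomial (ZMod 2)} (h : M + 1 ∣ Q) :
    oddPart (1 + Q) = 1 + Q := by
  obtain ⟨R, rfl⟩ := h
  apply oddPart_eq_self <;> simp [M_add_one_eq, one_add_one_eq_two, CharTwo.two_eq_zero]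

lemma oddPart_X_pow_mul_X_add_one_pow_mul (i j : ℕ) (P : Polynomial (ZMod 2)) :
    oddPart (X ^ i * (X + 1) ^ j * P) = oddPart P := by
  rcases eq_or_ne P 0 with rfl | hP
  · simp [oddPart]
  have hXi : (X ^ i : Polynomial (ZMod 2)) = (X - C 0) ^ i := by simp
  have hXj : ((X + 1) ^ j : Polynomial (ZMod 2)) = (X - C 1) ^ j := by simp [CharTwo.sub_eq_add]
  have hc : (X ^ i * (X + 1) ^ j : Polynomial (ZMod 2)) ≠ 0 :=
    mul_ne_zero (pow_ne_zero _ X_ne_zero) (pow_ne_zero _ (X_add_C_ne_zero 1))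
  have hmult (a : ZMod 2) : (X ^ i * (X + 1) ^ j * P).rootMultiplicity a
      = (X ^ i).rootMultiplicity a + ((X + 1) ^ j).rootMultiplicity a + P.rootMultiplicity a := by
    rw [rootMultiplicity_mul (mul_ne_zero hc hP), rootMultiplicity_mul hc]
  have h0 : (X ^ i * (X + 1) ^ j * P).rootMultiplicity 0 = i + P.rootMultiplicity 0 := by
    rw [hmult, hXi, rootMultiplicity_X_sub_C_pow, rootMultiplicity_eq_zero (by simp), add_zero]
  have h1 : (X ^ i * (X + 1) ^ j * P).rootMultiplicity 1 = j + P.rootMultiplicity 1 := by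
    rw [hmult, hXj, rootMultiplicity_X_sub_C_pow, rootMultiplicity_eq_zero (by simp), zero_add]
  have hdvd : X ^ P.rootMultiplicity 0 * (X + 1) ^ P.rootMultiplicity 1 ∣ P := by
    have hcop : IsCoprime (X : Polynomial (ZMod 2)) (X + 1) := ⟨-1, 1, by ring⟩
    refine hcop.pow.mul_dvd ?_ ?_
    · simpa using pow_rootMultiplicity_dvd P 0
    · simpa [CharTwo.sub_eq_add] using pow_rootMultiplicity_dvd P 1
  rw [oddPart, oddPart, h0, h1, pow_add, pow_add, mul_mul_mul_comm]
  exact EuclideanDomain.mul_div_mul_cancel hc hdvd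

lemma oddPart_M_add_one_pow_mul (j : ℕ) (P : Polynomial (ZMod 2)) :
    oddPart ((M + 1) ^ j * P) = oddPart P := by
  rw [M_add_one_eq, mul_pow, oddPart_X_pow_mul_X_add_one_pow_mul]

noncomputable def collatzStep (P : Polynomial (ZMod 2)) : Polynomial (ZMod 2) :=
  oddPart (1 + M * P)

lemma collatz_two_mul_add_one (A : Polynomial (ZMod 2)) (k : ℕ) :
    collatz A (2 * k + 1) = collatzStep^[k] (oddPart A) := by
  induction k with
  | zero => rfl
  | succ k ih =>
    rw [Function.iterate_succ_apply', ← ih, collatzStep,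
      show 2 * (k + 1) + 1 = 2 * k + 1 + 1 + 1 by ring]
    simp [collatz, Nat.add_mod]

lemma collatzLength_eq_of_isLeast {A : Polynomial (ZMod 2)} {m : ℕ}
    (h : IsLeast {k | collatzStep^[k] (oddPart A) = 1} m) : collatzLength A = m + 1 := by
  simp only [collatzLength, collatz_two_mul_add_one, h.csInf_eq]

lemma Function.isLeast_iterate_eq_add {α : Type*} {f : α → α} {x y : α} {d m : ℕ}
    (hx : ∀ i < d, f^[i] x ≠ y) (h : IsLeast {k | f^[k] (f^[d] x) = y} m) :
    IsLeast {k | f^[k] x = y} (d + m) := by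
  refine ⟨?_, fun k hk => ?_⟩
  · show f^[d + m] x = y
    rw [add_comm, Function.iterate_add_apply]
    exact h.1
  by_contra! hlt
  rcases lt_or_ge k d with hkd | hdk
  · exact hx k hkd hk
  · obtain ⟨j, rfl⟩ := Nat.exists_eq_add_of_le hdk
    have := h.2 (show f^[j] (f^[d] x) = y by rwa [← Function.iterate_add_apply, add_comm])
    omega

lemma collatzStep_one_add (c d : ℕ) (F : Polynomial (ZMod 2)) :
    collatzStep (1 + M ^ c * (M + 1) ^ (d + 1) * F)
      = oddPart (1 + M ^ (c + 1) * (M + 1) ^ d * F) := by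
  rw [collatzStep, show 1 + M * (1 + M ^ c * (M + 1) ^ (d + 1) * F)
      = (M + 1) ^ 1 * (1 + M ^ (c + 1) * (M + 1) ^ d * F) by ring, oddPart_M_add_one_pow_mul]

lemma iterate_collatzStep_one_add (c i e : ℕ) (F : Polynomial (ZMod 2)) :
    collatzStep^[i] (1 + M ^ c * (M + 1) ^ (i + e + 1) * F)
      = 1 + M ^ (c + i) * (M + 1) ^ (e + 1) * F := by
  induction i generalizing c with
  | zero => simp
  | succ i ih =>
    rw [Function.iterate_succ_apply, show i + 1 + e + 1 = i + e + 1 + 1 by ring,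
      collatzStep_one_add, oddPart_one_add_of_M_add_one_dvd
        ((dvd_pow_self _ (by omega)).mul_left _ |>.mul_right _), ih]
    ring_nf

lemma iterate_collatzStep_one_add_eq_oddPart (c : ℕ) {d : ℕ} (hd : 0 < d)
    (F : Polynomial (ZMod 2)) :
    collatzStep^[d] (1 + M ^ c * (M + 1) ^ d * F) = oddPart (1 + M ^ (c + d) * F) := by
  obtain ⟨e, rfl⟩ : ∃ e, d = e + 1 := ⟨d - 1, by omega⟩
  have := iterate_collatzStep_one_add c e 0 F
  rw [zero_add, add_zero] at this
  rw [Function.iterate_succ_apply', this, collatzStep_one_add (c + e) 0, pow_zero, mul_one,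
    add_assoc]

lemma iterate_collatzStep_one_add_ne_one (c : ℕ) {d i : ℕ} (hi : i < d)
    {F : Polynomial (ZMod 2)} (hF : F ≠ 0) : collatzStep^[i] (1 + M ^ c * (M + 1) ^ d * F) ≠ 1 := by
  obtain ⟨e, rfl⟩ := Nat.exists_eq_add_of_lt hi
  rw [iterate_collatzStep_one_add, Ne, add_eq_left]
  exact mul_ne_zero (mul_ne_zero (pow_ne_zero _ M_ne_zero) (pow_ne_zero _ M_add_one_ne_zero)) hF

lemma oddPart_one_add_M_pow_two_pow_mul_odd {s w : ℕ} {G : Polynomial (ZMod 2)}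
    (hG : 1 + M ^ (2 ^ (s + 1) * w) = (M + 1) ^ 2 ^ (s + 1) * G) :
    oddPart (1 + M ^ (2 ^ s * (2 * w + 1))) = 1 + M ^ 2 ^ s * (M + 1) ^ 2 ^ s * G := by
  have hfac : 1 + M ^ (2 ^ s * (2 * w + 1))
      = (M + 1) ^ 2 ^ s * (1 + M ^ 2 ^ s * (M + 1) ^ 2 ^ s * G) := by
    linear_combination (-1 : Polynomial (ZMod 2)) * M_add_one_pow_two_pow s + M ^ 2 ^ s * hG
      - M ^ 2 ^ s * CharTwo.two_eq_zero (R := Polynomial (ZMod 2))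
  rw [hfac, oddPart_M_add_one_pow_mul, oddPart_one_add_of_M_add_one_dvd]
  exact (dvd_pow_self _ (by positivity)).mul_left _ |>.mul_right _

lemma iterate_collatzStep_oddPart_one_add_M_pow (s w : ℕ) :
    collatzStep^[2 ^ s] (oddPart (1 + M ^ (2 ^ s * (2 * w + 1))))
      = oddPart (1 + M ^ (2 ^ s * (2 * w + 1) + 2 ^ s)) := by
  obtain ⟨G, hG⟩ := M_add_one_pow_two_pow_dvd (s + 1) w
  rw [oddPart_one_add_M_pow_two_pow_mul_odd hG,
    iterate_collatzStep_one_add_eq_oddPart _ (by positivity),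
    ← oddPart_M_add_one_pow_mul (2 ^ (s + 1))]
  congr 1
  linear_combination M_add_one_pow_two_pow (s + 1) - M ^ 2 ^ (s + 1) * hG
    + M ^ 2 ^ (s + 1) * CharTwo.two_eq_zero (R := Polynomial (ZMod 2))

lemma iterate_collatzStep_oddPart_one_add_M_pow_ne_one {s w i : ℕ} (hw : 0 < w)
    (hi : i < 2 ^ s) :
    collatzStep^[i] (oddPart (1 + M ^ (2 ^ s * (2 * w + 1)))) ≠ 1 := by
  obtain ⟨G, hG⟩ := M_add_one_pow_two_pow_dvd (s + 1) w
  have hG0 : G ≠ 0 := by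
    rintro rfl
    rw [mul_zero] at hG
    exact one_add_M_pow_ne_zero (by positivity) hG
  rw [oddPart_one_add_M_pow_two_pow_mul_odd hG]
  exact iterate_collatzStep_one_add_ne_one _ hi hG0

lemma oddPart_one_add_M_two_pow (s : ℕ) : oddPart (1 + M ^ 2 ^ s) = 1 := by
  rw [← M_add_one_pow_two_pow, ← mul_one ((M + 1) ^ 2 ^ s), oddPart_M_add_one_pow_mul,
    oddPart_eq_self] <;> simp

lemma two_pow_mul_odd_add_le {s w k : ℕ} (hw : 0 < w) (h : 2 ^ s * (2 * w + 1) ≤ 2 ^ k) :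
    2 ^ s * (2 * w + 1) + 2 ^ s ≤ 2 ^ k := by
  have hsk : s < k := by
    by_contra! hks
    have := Nat.pow_le_pow_right two_pos hks
    nlinarith [Nat.two_pow_pos s]
  obtain ⟨j, rfl⟩ : ∃ j, k = s + (j + 1) := ⟨k - s - 1, by omega⟩
  rw [pow_add] at h ⊢
  have hodd : 2 * w + 1 ≤ 2 ^ (j + 1) := Nat.le_of_mul_le_mul_left h (Nat.two_pow_pos s)
  have heven : 2 * w + 2 ≤ 2 ^ (j + 1) := by rw [pow_succ] at hodd ⊢; omega
  calc 2 ^ s * (2 * w + 1) + 2 ^ s = 2 ^ s * (2 * w + 2) := by ring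
    _ ≤ 2 ^ s * 2 ^ (j + 1) := Nat.mul_le_mul_left _ heven

theorem isLeast_iterate_collatzStep_oddPart_one_add_M_pow {n k : ℕ} (hn : n ≤ 2 ^ k)
    (hk : 2 ^ k < 2 * n) :
    IsLeast {m | collatzStep^[m] (oddPart (1 + M ^ n)) = 1} (2 ^ k - n) := by
  induction hd : 2 ^ k - n using Nat.strong_induction_on generalizing n with
  | _ d ih =>
    obtain ⟨s, _, ⟨w, rfl⟩, rfl⟩ := Nat.exists_eq_two_pow_mul_odd (n := n) (by omega)
    rcases Nat.eq_zero_or_pos w with rfl | hw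
    · simp only [mul_zero, zero_add, mul_one] at hn hk hd ⊢
      obtain rfl : k = s := by
        have h1 := (Nat.pow_le_pow_iff_right (by norm_num)).mp hn
        have h2 := (Nat.pow_lt_pow_iff_right (by norm_num)).mp (pow_succ' 2 s ▸ hk)
        omega
      rw [Nat.sub_self] at hd
      subst hd
      exact ⟨oddPart_one_add_M_two_pow k, fun m _ => Nat.zero_le m⟩
    · set n := 2 ^ s * (2 * w + 1)
      have hle : n + 2 ^ s ≤ 2 ^ k := two_pow_mul_odd_add_le hw hn
      have hs := Nat.two_pow_pos s
      rw [← hd, show 2 ^ k - n = 2 ^ s + (2 ^ k - (n + 2 ^ s)) by omega]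
      refine Function.isLeast_iterate_eq_add
        (fun i hi => iterate_collatzStep_oddPart_one_add_M_pow_ne_one hw hi) ?_
      rw [iterate_collatzStep_oddPart_one_add_M_pow]
      exact ih _ (by omega) hle (by omega) rfl

theorem collatzLength_one_add_M_pow_mul {a b k : ℕ} (hb : 0 < b) (hk : a + b ≤ 2 ^ k)
    (hk' : 2 ^ k < 2 * (a + b)) :
    collatzLength (1 + M ^ a * (M + 1) ^ b) = b + (2 ^ k - (a + b)) + 1 := by
  apply collatzLength_eq_of_isLeast
  rw [oddPart_one_add_of_M_add_one_dvd ((dvd_pow_self _ hb.ne').mul_left _),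
    ← mul_one (M ^ a * _)]
  refine Function.isLeast_iterate_eq_add
    (fun i hi => iterate_collatzStep_one_add_ne_one a hi one_ne_zero) ?_
  rw [iterate_collatzStep_one_add_eq_oddPart a hb, mul_one]
  exact isLeast_iterate_collatzStep_oddPart_one_add_M_pow hk hk'

lemma lt_two_pow_and_two_pow_le_of_isLeast {m w : ℕ} (hm : 0 < m)
    (hw : IsLeast {s | 0 < s ∧ m < 2 ^ s} w) : m < 2 ^ w ∧ 2 ^ w ≤ 2 * m := by
  refine ⟨hw.1.2, ?_⟩
  obtain ⟨v, rfl⟩ : ∃ v, w = v + 1 := ⟨w - 1, by have := hw.1.1; omega⟩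
  by_contra! h
  rw [pow_succ] at h
  have hv : 0 < v := Nat.pos_of_ne_zero fun hv => by subst hv; omega
  have := hw.2 ⟨hv, by omega⟩
  omega

theorem length_one_add_M_pow_mul_general (a b : ℕ) (hb : 2 ≤ b)
    (A : Polynomial (ZMod 2)) (hA : A = 1 + M ^ a * (M + 1) ^ b) :
    (∀ r : ℕ, 1 ≤ r → a + b = 2 ^ r → collatzLength A = b + 1) ∧
    (∀ r u : ℕ, 1 ≤ r → Odd u → 3 ≤ u → a + b = 2 ^ r * u →
      ∀ w : ℕ, IsLeast {s : ℕ | 0 < s ∧ u - 1 < 2 ^ s} w →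
        collatzLength A = b + 2 ^ r * (2 ^ w - u) + 1) ∧
    (∀ t : ℕ, 1 ≤ t → a + b = 2 ^ t + 1 → collatzLength A = a + 2 * b - 1) ∧
    (∀ v : ℕ, (¬ ∃ s : ℕ, v = 2 ^ s) → a + b = 2 * v + 1 →
      ∀ r : ℕ, IsLeast {s : ℕ | 0 < s ∧ 2 * v < 2 ^ s} r →
        collatzLength A = b + 2 ^ r - 2 * v) := by
  have hlen (k : ℕ) (hk : a + b ≤ 2 ^ k) (hk' : 2 ^ k < 2 * (a + b)) :
      collatzLength A = b + (2 ^ k - (a + b)) + 1 :=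
    hA ▸ collatzLength_one_add_M_pow_mul (by omega) hk hk'
  refine ⟨fun r _ hab => ?_, fun r u _ _ hu hab w hw => ?_, fun t _ hab => ?_,
    fun v _ hab r hr => ?_⟩
  · rw [hlen r (by omega) (by omega)]
    omega
  · obtain ⟨hw1, hw2⟩ := lt_two_pow_and_two_pow_le_of_isLeast (by omega) hw
    rw [hlen (r + w), pow_add, hab, ← Nat.mul_sub]
    · rw [hab, pow_add]
      exact Nat.mul_le_mul_left _ (by omega)
    · rw [hab, pow_add, mul_left_comm]
      exact Nat.mul_lt_mul_of_pos_left (by omega) (Nat.two_pow_pos r)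
  · rw [hlen (t + 1) (by rw [pow_succ]; omega) (by rw [pow_succ]; omega), pow_succ]
    omega
  · obtain ⟨hr1, hr2⟩ := lt_two_pow_and_two_pow_le_of_isLeast (by omega) hr
    rw [hlen r (by omega) (by omega)]
    omega

theorem length_one_add_M_pow_mul (a b : ℕ) (ha : 2 ≤ a) (hb : 2 ≤ b)
    (A : Polynomial (ZMod 2)) (hA : A = 1 + M ^ a * (M + 1) ^ b) :
    (∀ r : ℕ, 1 ≤ r → a + b = 2 ^ r → collatzLength A = b + 1) ∧
    (∀ r u : ℕ, 1 ≤ r → Odd u → 3 ≤ u → a + b = 2 ^ r * u →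
      ∀ w : ℕ, IsLeast {s : ℕ | 0 < s ∧ u - 1 < 2 ^ s} w →
        collatzLength A = b + 2 ^ r * (2 ^ w - u) + 1) ∧
    (∀ t : ℕ, 1 ≤ t → a + b = 2 ^ t + 1 → collatzLength A = a + 2 * b - 1) ∧
    (∀ v : ℕ, (¬ ∃ s : ℕ, v = 2 ^ s) → a + b = 2 * v + 1 →
      ∀ r : ℕ, IsLeast {s : ℕ | 0 < s ∧ 2 * v < 2 ^ s} r →
        collatzLength A = b + 2 ^ r - 2 * v) :=
  length_one_add_M_pow_mul_general a b hb A hA
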